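/- Let a, b ∈ ℂ, set X = ab and Y = a³ + b³, and suppose X = −1, Y ≠ 2i, Y ≠ −2i, and Y is not a real number. Then at least one of the matrices M₁₁, M₁₃ has both eigenvalues nonzero and of distinct absolute values. -/

import Mathlib

/-!
Put `Y = a³ + b³`. When `ab = -1`, `M₁₁` has trace `Y - 2` and determinant `-2Y`, so its
eigenvalues are `Y` and `-2`; this settles the case `|Y| ≠ 2`. When `|Y| = 2`, `M₁₃` has trace
`T = Y² + 4Y - 4` and determinant `D = -16Y`. Two complex numbers of equal modulus with sum `T`
and product `D` satisfy `conj T · D = |D| · T`; using `conj Y = 4 / Y` this becomes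
`(Y + 2)(Y² + 4) = 0`, which the hypotheses on `Y` exclude.
-/

open Matrix

/-- A 2×2 complex matrix has both eigenvalues nonzero and of distinct absolute values:
the eigenvalues are the roots α, β of the characteristic polynomial, equivalently the
pair with α + β = tr A and α·β = det A. -/
def nonzeroDistinctNormEigenvalues (A : Matrix (Fin 2) (Fin 2) ℂ) : Prop :=
  ∃ α β : ℂ, α + β = A.trace ∧ α * β = A.det ∧ α ≠ 0 ∧ β ≠ 0 ∧
    ‖α‖ ≠ ‖β‖

open Polynomial ComplexConjugate

theorem IsAlgClosed.exists_add_eq_and_mul_eq {k : Type*} [Field k] [IsAlgClosed k] (s p : k) :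
    ∃ α β : k, α + β = s ∧ α * β = p := by
  have hdeg : (C 1 * X ^ 2 + C (-s) * X + C p).degree ≠ 0 := by
    rw [degree_quadratic one_ne_zero]; decide
  obtain ⟨α, hα⟩ := IsAlgClosed.exists_root _ hdeg
  simp only [IsRoot, eval_add, eval_mul, eval_pow, eval_C, eval_X] at hα
  exact ⟨α, s - α, by ring, by linear_combination -hα⟩

theorem Complex.conj_add_mul_mul_eq_of_norm_eq {α β : ℂ} (h : ‖α‖ = ‖β‖) :
    conj (α + β) * (α * β) = ‖α * β‖ * (α + β) := by
  have hα : conj α * α = ‖α * β‖ := by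
    rw [Complex.conj_mul', norm_mul, ← h, sq]; push_cast; ring
  have hβ : conj β * β = ‖α * β‖ := by
    rw [Complex.conj_mul', norm_mul, h, sq]; push_cast; ring
  rw [map_add]
  linear_combination β * hα + α * hβ

theorem nonzeroDistinctNormEigenvalues_of_conj_trace_mul_det_ne
    {A : Matrix (Fin 2) (Fin 2) ℂ} (hdet : A.det ≠ 0)
    (h : conj A.trace * A.det ≠ ‖A.det‖ * A.trace) :
    nonzeroDistinctNormEigenvalues A := by
  obtain ⟨α, β, hs, hp⟩ := IsAlgClosed.exists_add_eq_and_mul_eq A.trace A.det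
  have hαβ : α * β ≠ 0 := hp ▸ hdet
  refine ⟨α, β, hs, hp, left_ne_zero_of_mul hαβ, right_ne_zero_of_mul hαβ, fun hnorm => h ?_⟩
  rw [← hs, ← hp]
  exact Complex.conj_add_mul_mul_eq_of_norm_eq hnorm

def M₁₁ (a b : ℂ) : Matrix (Fin 2) (Fin 2) ℂ :=
  !![a ^ 3 + a * b, a + b ^ 2; a ^ 2 + b, a * b + b ^ 3]

def M₁₃ (a b : ℂ) : Matrix (Fin 2) (Fin 2) ℂ :=
  !![a ^ 6 + 3 * a ^ 3 + 3 * a * b + b ^ 3,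
     a ^ 4 + 2 * a ^ 2 * b + a * b ^ 3 + a + b ^ 5 + 2 * b ^ 2;
     a ^ 5 + a ^ 3 * b + 2 * a ^ 2 + 2 * a * b ^ 2 + b ^ 4 + b,
     a ^ 3 + 3 * a * b + b ^ 6 + 3 * b ^ 3]

section

variable {a b : ℂ}

theorem trace_M₁₁ (hab : a * b = -1) : (M₁₁ a b).trace = (a ^ 3 + b ^ 3) - 2 := by
  rw [M₁₁, trace_fin_two_of]
  linear_combination 2 * hab

theorem det_M₁₁ (hab : a * b = -1) : (M₁₁ a b).det = (a ^ 3 + b ^ 3) * -2 := by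
  rw [M₁₁, det_fin_two_of]
  linear_combination (b ^ 3 - a * b + a ^ 2 * b ^ 2 + a ^ 3) * hab

theorem trace_M₁₃ (hab : a * b = -1) :
    (M₁₃ a b).trace = (a ^ 3 + b ^ 3) ^ 2 + 4 * (a ^ 3 + b ^ 3) - 4 := by
  rw [M₁₃, trace_fin_two_of]
  linear_combination (-2 * a ^ 2 * b ^ 2 + 2 * a * b + 4) * hab

theorem det_M₁₃ (hab : a * b = -1) : (M₁₃ a b).det = -16 * (a ^ 3 + b ^ 3) := by
  rw [M₁₃, det_fin_two_of]
  linear_combination -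
    (-14 * b ^ 3 + a * b + 8 * a * b ^ 4 - 2 * a ^ 2 * b ^ 2 - 2 * a ^ 2 * b ^ 5
      - 14 * a ^ 3 + 8 * a ^ 4 * b + 2 * a ^ 4 * b ^ 4 - 2 * a ^ 5 * b ^ 2
      - a ^ 5 * b ^ 5) * hab

theorem nonzeroDistinctNormEigenvalues_M₁₁ (hab : a * b = -1) (hY0 : a ^ 3 + b ^ 3 ≠ 0)
    (hY : ‖a ^ 3 + b ^ 3‖ ≠ 2) : nonzeroDistinctNormEigenvalues (M₁₁ a b) := by
  refine ⟨a ^ 3 + b ^ 3, -2, ?_, (det_M₁₁ hab).symm, hY0, by norm_num, by simpa using hY⟩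
  rw [trace_M₁₁ hab]
  ring

end

theorem cubic_eq_zero_of_norm_eq_two {Y : ℂ} (hY : ‖Y‖ = 2)
    (h : conj (Y ^ 2 + 4 * Y - 4) * (-16 * Y) = 32 * (Y ^ 2 + 4 * Y - 4)) :
    (Y + 2) * (Y - 2 * Complex.I) * (Y + 2 * Complex.I) = 0 := by
  have hconj : conj Y * Y = 4 := by rw [Complex.conj_mul', hY]; norm_num
  simp only [map_sub, map_add, map_mul, map_pow, map_ofNat] at h
  linear_combination (-Y / 32) * h + (-(conj Y * Y + 4) / 2 - 2 * Y) * hconj +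
    (-4 * (Y + 2)) * Complex.I_sq

theorem nonzeroDistinctNormEigenvalues_M₁₃ {a b : ℂ} (hab : a * b = -1)
    (hY : ‖a ^ 3 + b ^ 3‖ = 2) (hY0 : a ^ 3 + b ^ 3 ≠ -2)
    (hY1 : a ^ 3 + b ^ 3 ≠ 2 * Complex.I) (hY2 : a ^ 3 + b ^ 3 ≠ -2 * Complex.I) :
    nonzeroDistinctNormEigenvalues (M₁₃ a b) := by
  have hYne : a ^ 3 + b ^ 3 ≠ 0 := fun h => by simp [h] at hY
  refine nonzeroDistinctNormEigenvalues_of_conj_trace_mul_det_ne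
    (by rw [det_M₁₃ hab]; simpa using hYne) fun h => ?_
  have hnorm : ‖(M₁₃ a b).det‖ = 32 := by rw [det_M₁₃ hab, norm_mul, hY]; norm_num
  rw [hnorm, trace_M₁₃ hab, det_M₁₃ hab] at h
  rcases mul_eq_zero.mp (cubic_eq_zero_of_norm_eq_two hY (by exact_mod_cast h)) with h | h
  · rcases mul_eq_zero.mp h with h | h
    · exact hY0 (eq_neg_of_add_eq_zero_left h)
    · exact hY1 (sub_eq_zero.mp h)
  · exact hY2 (by linear_combination h)

theorem stmt_12 (a b X Y : ℂ) (hX : X = a * b) (hY : Y = a ^ 3 + b ^ 3)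
    (hXm1 : X = -1) (hY1 : Y ≠ 2 * Complex.I) (hY2 : Y ≠ -2 * Complex.I)
    (hYreal : Y.im ≠ 0) :
    nonzeroDistinctNormEigenvalues
        !![a ^ 3 + a * b, a + b ^ 2; a ^ 2 + b, a * b + b ^ 3] ∨
      nonzeroDistinctNormEigenvalues
        !![a ^ 6 + 3 * a ^ 3 + 3 * a * b + b ^ 3,
           a ^ 4 + 2 * a ^ 2 * b + a * b ^ 3 + a + b ^ 5 + 2 * b ^ 2;
           a ^ 5 + a ^ 3 * b + 2 * a ^ 2 + 2 * a * b ^ 2 + b ^ 4 + b,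
           a ^ 3 + 3 * a * b + b ^ 6 + 3 * b ^ 3] := by
  have hab : a * b = -1 := hX ▸ hXm1
  subst hY
  by_cases hnorm : ‖a ^ 3 + b ^ 3‖ = 2
  · refine .inr (nonzeroDistinctNormEigenvalues_M₁₃ hab hnorm ?_ hY1 hY2)
    intro h
    simp [h] at hYreal
  · refine .inl (nonzeroDistinctNormEigenvalues_M₁₁ hab ?_ hnorm)
    intro h
    simp [h] at hYreal
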